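/- The formula 𝟏 ⧀ ◇((p ⧀ q) ∧ q) is KbiG-valid on every fuzzy frame whose set of worlds W is finite, but there exists a fuzzy frame on which it is not KbiG-valid. Consequently, the ◇-fragment of the bi-Gödel modal logic of fuzzy frames lacks the finite model property. -/

import Mathlib

/- Truth values: the real unit interval [0,1] with its complete lattice structure
   (so `sInf ∅ = 1` and `sSup ∅ = 0`). -/
instance : Fact ((0:ℝ) ≤ 1) := ⟨zero_le_one⟩

abbrev TV : Type := unitInterval

/-- Gödel implication: `a →G b = 1` if `a ≤ b`, else `b`. -/
noncomputable def gimp (a b : TV) : TV := if a ≤ b then 1 else b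

/-- Gödel coimplication: `a ⧀G b = 0` if `a ≤ b`, else `a`. -/
noncomputable def gcoimp (a b : TV) : TV := if a ≤ b then 0 else a

/-- ¬-free formulas: the language `biL_{□,◇}` over the countable variable set `ℕ`. -/
inductive FormulaB : Type
  | var : ℕ → FormulaB
  | and : FormulaB → FormulaB → FormulaB
  | or : FormulaB → FormulaB → FormulaB
  | imp : FormulaB → FormulaB → FormulaB
  | coimp : FormulaB → FormulaB → FormulaB
  | box : FormulaB → FormulaB
  | dia : FormulaB → FormulaB

/-- KbiG valuation on a fuzzy frame `(W, R)` with `R : W × W → [0,1]`: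
`v(□φ,w) = inf_{w'} (R(w,w') →G v(φ,w'))`, `v(◇φ,w) = sup_{w'} min(R(w,w'), v(φ,w'))`. -/
noncomputable def fval {W : Type} (R : W → W → TV) (v : ℕ → W → TV) :
    FormulaB → W → TV
  | .var p, w => v p w
  | .and φ ψ, w => fval R v φ w ⊓ fval R v ψ w
  | .or φ ψ, w => fval R v φ w ⊔ fval R v ψ w
  | .imp φ ψ, w => gimp (fval R v φ w) (fval R v ψ w)
  | .coimp φ ψ, w => gcoimp (fval R v φ w) (fval R v ψ w)
  | .box φ, w => ⨅ w', gimp (R w w') (fval R v φ w')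
  | .dia φ, w => ⨆ w', (R w w') ⊓ fval R v φ w'

/-- `𝟏 := p → p`. -/
def bone : FormulaB := .imp (.var 0) (.var 0)

/-- `𝟎 := p ⧀ p`. -/
def bzero : FormulaB := .coimp (.var 0) (.var 0)

/-- Gödel negation `∼φ := φ → 𝟎`. -/
def bnegG (φ : FormulaB) : FormulaB := .imp φ bzero

/-- Baaz delta `Δτ := ∼(𝟏 ⧀ τ)`. -/
def bDelta (τ : FormulaB) : FormulaB := bnegG (.coimp bone τ)

/-- The formula `𝟏 ⧀ ◇((p ⧀ q) ∧ q)` with `p := var 0`, `q := var 1`. -/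
def phiFin : FormulaB := .coimp bone (.dia (.and (.coimp (.var 0) (.var 1)) (.var 1)))

/-! `𝟏 ⧀ ◇ψ` takes value `1` exactly when `◇ψ < 1`. For `ψ = (p ⧀ q) ∧ q` the value of `ψ` at a
world is `q` if `q < p` and `0` otherwise, so it is always `< 1`. Over finitely many worlds the
supremum defining `◇ψ` is attained, hence `< 1` as well. On `W = [0,1]` with `R ≡ 1`, `p ≡ 1` and
`q = id`, `ψ` takes the value `t` at every world `t < 1`, so `◇ψ = 1` at any world. -/

theorem iSup_lt_of_finite {ι α : Type*} [Finite ι] [CompleteLinearOrder α] {f : ι → α} {a : α}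
    (ha : ⊥ < a) (h : ∀ i, f i < a) : ⨆ i, f i < a := by
  cases nonempty_fintype ι
  rw [← Finset.sup_univ_eq_iSup]
  exact (Finset.sup_lt_iff ha).2 fun i _ => h i

lemma gcoimp_one_eq_one_iff {a : TV} : gcoimp 1 a = 1 ↔ a < 1 := by
  unfold gcoimp
  split_ifs with h
  · simp [h.not_gt]
  · simpa using h

lemma gcoimp_inf_lt_one (a b : TV) : gcoimp a b ⊓ b < 1 := by
  unfold gcoimp
  split_ifs with h
  · exact inf_le_left.trans_lt zero_lt_one
  · exact inf_le_right.trans_lt ((not_le.1 h).trans_le unitInterval.le_one')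

lemma gcoimp_inf_of_lt {a b : TV} (h : b < a) : gcoimp a b ⊓ b = b := by
  rw [gcoimp, if_neg h.not_ge, inf_eq_right.2 h.le]

section fval

variable {W : Type} (R : W → W → TV) (v : ℕ → W → TV)

lemma fval_bone (w : W) : fval R v bone w = 1 := by
  simp [bone, fval, gimp]

lemma fval_phiFin_eq_one_iff (w : W) :
    fval R v phiFin w = 1 ↔ ⨆ w', R w w' ⊓ (gcoimp (v 0 w') (v 1 w') ⊓ v 1 w') < 1 := by
  rw [phiFin, fval, fval_bone]
  exact gcoimp_one_eq_one_iff

theorem fval_phiFin_of_finite [Finite W] (w : W) : fval R v phiFin w = 1 :=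
  (fval_phiFin_eq_one_iff R v w).2 <|
    iSup_lt_of_finite zero_lt_one fun _ => inf_le_right.trans_lt (gcoimp_inf_lt_one _ _)

end fval

theorem fval_phiFin_unitInterval_ne_one :
    fval (fun _ _ : TV => 1) (fun n t => if n = 0 then 1 else t) phiFin 1 ≠ 1 := by
  rw [Ne, fval_phiFin_eq_one_iff, not_lt]
  refine top_le_iff.2 (iSup_eq_top.2 fun b hb => ?_)
  obtain ⟨t, hbt, ht⟩ : ∃ t, b < t ∧ t < (1 : TV) := exists_between hb
  refine ⟨t, ?_⟩
  simpa only [↓reduceIte, one_ne_zero, gcoimp_inf_of_lt ht, inf_of_le_right unitInterval.le_one']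
    using hbt

theorem stmt5 :
    (∀ (W : Type), Nonempty W → Finite W → ∀ (R : W → W → TV) (v : ℕ → W → TV) (w : W),
        fval R v phiFin w = 1) ∧
    (∃ (W : Type) (_ : Nonempty W) (R : W → W → TV) (v : ℕ → W → TV) (w : W),
        fval R v phiFin w ≠ 1) :=
  ⟨fun _ _ _ R v w => fval_phiFin_of_finite R v w,
    ⟨TV, inferInstance, _, _, 1, fval_phiFin_unitInterval_ne_one⟩⟩
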